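/- arXiv:math/0501520 — 3 statements merged into one kernel-verified Lean document; each statement's English description precedes it below -/
import Mathlib

section
/- If U = (-3 + x + 9y)(3 + x + 9y)/(4x^2) and V = 9(3 + x^2 + 18xy + 81y^2)/(4x^3) where (x,y) satisfies x^4 - 2x^2y^2 + 81y^4 - 2x^2 - 16xy - 18y^2 + 1 = 0 and x ≠ 0, and if additionally 10 + 2U + 3U^2 - 2V ≠ 0, then the quantities u = Q(U,V)/(2(10 + 2U + 3U^2 - 2V)^2) and v = R(U,V)/(2(10 + 2U + 3U^2 - 2V)^3), with Q(U,V) = -1300 - 520U - 477U^2 + 19U^3 - 17U^4 + (260 + 52U + 33U^2)V and R(U,V) = 9(1000 - 1900U - 630U^2 - 1237U^3 - 39U^4 - 121U^5 + 2U^6) + 9(-200 + 420U + 82U^2 + 131U^3 + 2U^4)V, satisfy the Weierstrass equation v^2 + uv + v = u^3 + u^2 - 10u - 10. -/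
theorem map_X045_to_X015 (K : Type*) [Field K] [CharZero K]
    (x y U V u v : K) (hx : x ≠ 0)
    (hcurve : x^4 - 2*x^2*y^2 + 81*y^4 - 2*x^2 - 16*x*y - 18*y^2 + 1 = 0)
    (hU : U = (-3 + x + 9*y)*(3 + x + 9*y)/(4*x^2))
    (hV : V = 9*(3 + x^2 + 18*x*y + 81*y^2)/(4*x^3))
    (hden : 10 + 2*U + 3*U^2 - 2*V ≠ 0)
    (hu : u = (-1300 - 520*U - 477*U^2 + 19*U^3 - 17*U^4 + (260 + 52*U + 33*U^2)*V)
        / (2*(10 + 2*U + 3*U^2 - 2*V)^2))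
    (hv : v = (9*(1000 - 1900*U - 630*U^2 - 1237*U^3 - 39*U^4 - 121*U^5 + 2*U^6)
          + 9*(-200 + 420*U + 82*U^2 + 131*U^3 + 2*U^4)*V)
        / (2*(10 + 2*U + 3*U^2 - 2*V)^3)) :
    v^2 + u*v + v = u^3 + u^2 - 10*u - 10 := by
  have hF : V^2 = U^4 - 2*U^3 + 11*U^2 + 10*U + 25 := by
    have hU' : U * (4*x^2) = (-3 + x + 9*y)*(3 + x + 9*y) := by
      rw [hU]; field_simp
    have hV' : V * (4*x^3) = 9*(3 + x^2 + 18*x*y + 81*y^2) := by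
      rw [hV]; field_simp
    have h8 : (256:K)*x^8 ≠ 0 := mul_ne_zero (by norm_num) (pow_ne_zero _ hx)
    refine mul_left_cancel₀ h8 ?_
    linear_combination (16*x^2)*(V*(4*x^3)) * hV' + (16*x^2)*(9*(3 + x^2 + 18*x*y + 81*y^2)) * hV'
      - ((U*(4*x^2))^3 + (U*(4*x^2))^2*((-3 + x + 9*y)*(3 + x + 9*y)) + (U*(4*x^2))*((-3 + x + 9*y)*(3 + x + 9*y))^2 + ((-3 + x + 9*y)*(3 + x + 9*y))^3) * hU'
      + 2*(4*x^2)*((U*(4*x^2))^2 + (U*(4*x^2))*((-3 + x + 9*y)*(3 + x + 9*y)) + ((-3 + x + 9*y)*(3 + x + 9*y))^2) * hU'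
      - 11*(16*x^4)*((U*(4*x^2)) + ((-3 + x + 9*y)*(3 + x + 9*y))) * hU'
      - 10*(64*x^6) * hU'
      + (-6561 + 118098*y^2 - 531441*y^4 - 52488*x*y - 472392*x*y^3
        - 4374*x^2 - 144342*x^2*y^2 - 17496*x^3*y - 7209*x^4) * hcurve
  have hD2 : (2:K)*(10 + 2*U + 3*U^2 - 2*V)^2 ≠ 0 := mul_ne_zero two_ne_zero (pow_ne_zero _ hden)
  have hD3 : (2:K)*(10 + 2*U + 3*U^2 - 2*V)^3 ≠ 0 := mul_ne_zero two_ne_zero (pow_ne_zero _ hden)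
  have hu' : u * (2*(10 + 2*U + 3*U^2 - 2*V)^2) = (-1300 - 520*U - 477*U^2 + 19*U^3 - 17*U^4 + (260 + 52*U + 33*U^2)*V) := by
    rw [hu, div_mul_cancel₀ _ hD2]
  have hv' : v * (2*(10 + 2*U + 3*U^2 - 2*V)^3) = (9*(1000 - 1900*U - 630*U^2 - 1237*U^3 - 39*U^4 - 121*U^5 + 2*U^6) + 9*(-200 + 420*U + 82*U^2 + 131*U^3 + 2*U^4)*V) := by
    rw [hv, div_mul_cancel₀ _ hD3]
  have key2 : 2*(9*(1000 - 1900*U - 630*U^2 - 1237*U^3 - 39*U^4 - 121*U^5 + 2*U^6) + 9*(-200 + 420*U + 82*U^2 + 131*U^3 + 2*U^4)*V)^2 + 2*(-1300 - 520*U - 477*U^2 + 19*U^3 - 17*U^4 + (260 + 52*U + 33*U^2)*V)*(9*(1000 - 1900*U - 630*U^2 - 1237*U^3 - 39*U^4 - 121*U^5 + 2*U^6) + 9*(-200 + 420*U + 82*U^2 + 131*U^3 + 2*U^4)*V)*(10 + 2*U + 3*U^2 - 2*V) + 4*(9*(1000 - 1900*U - 630*U^2 - 1237*U^3 - 39*U^4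 - 121*U^5 + 2*U^6) + 9*(-200 + 420*U + 82*U^2 + 131*U^3 + 2*U^4)*V)*(10 + 2*U + 3*U^2 - 2*V)^3
      = (-1300 - 520*U - 477*U^2 + 19*U^3 - 17*U^4 + (260 + 52*U + 33*U^2)*V)^3 + 2*(-1300 - 520*U - 477*U^2 + 19*U^3 - 17*U^4 + (260 + 52*U + 33*U^2)*V)^2*(10 + 2*U + 3*U^2 - 2*V)^2 - 40*(-1300 - 520*U - 477*U^2 + 19*U^3 - 17*U^4 + (260 + 52*U + 33*U^2)*V)*(10 + 2*U + 3*U^2 - 2*V)^4 - 80*(10 + 2*U + 3*U^2 - 2*V)^6 := by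
    linear_combination (-55320000 + 23080000*V - 2595200*V^2 + 12800*V^3 + 5120*V^4
      - 31656000*U + 12048000*U*V - 1182080*U*V^2 + 2560*U*V^3
      - 64014800*U^2 + 17323600*U^2*V - 756608*U^2*V^2 - 24960*U^2*V^3
      - 21568240*U^3 + 4149440*U^3*V - 117024*U^3*V^2
      - 20014052*U^4 + 2376300*U^4*V + 31032*U^4*V^2
      - 1947332*U^5 + 142280*U^5*V
      - 1515527*U^6 - 21345*U^6*V
      - 63367*U^7 - 3707*U^8) * hF
  have h8D : (8:K)*(10 + 2*U + 3*U^2 - 2*V)^6 ≠ 0 := mul_ne_zero (by norm_num) (pow_ne_zero _ hden)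
  refine mul_left_cancel₀ h8D ?_
  linear_combination 2*(2*(10 + 2*U + 3*U^2 - 2*V)^3*v + (9*(1000 - 1900*U - 630*U^2 - 1237*U^3 - 39*U^4 - 121*U^5 + 2*U^6) + 9*(-200 + 420*U + 82*U^2 + 131*U^3 + 2*U^4)*V)) * hv'
    + 2*(10 + 2*U + 3*U^2 - 2*V)*((2*(10 + 2*U + 3*U^2 - 2*V)^3*v) * hu' + (-1300 - 520*U - 477*U^2 + 19*U^3 - 17*U^4 + (260 + 52*U + 33*U^2)*V) * hv')
    + 4*(10 + 2*U + 3*U^2 - 2*V)^3 * hv'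
    - ((2*(10 + 2*U + 3*U^2 - 2*V)^2*u)^2 + (2*(10 + 2*U + 3*U^2 - 2*V)^2*u)*(-1300 - 520*U - 477*U^2 + 19*U^3 - 17*U^4 + (260 + 52*U + 33*U^2)*V) + (-1300 - 520*U - 477*U^2 + 19*U^3 - 17*U^4 + (260 + 52*U + 33*U^2)*V)^2) * hu'
    - 2*(10 + 2*U + 3*U^2 - 2*V)^2*(2*(10 + 2*U + 3*U^2 - 2*V)^2*u + (-1300 - 520*U - 477*U^2 + 19*U^3 - 17*U^4 + (260 + 52*U + 33*U^2)*V)) * hu'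
    + 40*(10 + 2*U + 3*U^2 - 2*V)^4 * hu'
    + key2
end

section
/- The polynomial x^4 - 2x^2y^2 + 81y^4 - 2x^2 - 16xy - 18y^2 + 1 is irreducible in Q[x,y]. -/
/-!
Viewed as a polynomial in `x` over `ℚ[y]`, the model is a monic quartic, so it is irreducible as
soon as one of its specializations is; at `y = 3` it becomes `x^4 - 20x^2 - 48x + 6400`. By Gauss's
lemma and reduction modulo 7 it suffices that `x^4 + x^2 + x + 2` is irreducible over `𝔽₇`, and
an exhaustive check shows that it has no roots and is not a product of two monic quadratics.
-/

namespace Polynomial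

theorem Monic.eq_X_sq_add_C_mul_X_add_C {R : Type*} [Semiring R] {p : R[X]} (hm : p.Monic)
    (h2 : p.natDegree = 2) : p = X ^ 2 + C (p.coeff 1) * X + C (p.coeff 0) := by
  ext n
  rcases n with _ | _ | _ | n
  · simp
  · simp
  · simp [← hm.coeff_natDegree, h2, coeff_X_pow]
  · have h0 : p.coeff (n + 3) = 0 := coeff_eq_zero_of_natDegree_lt (by omega)
    simp [h0, coeff_X_pow]

theorem Monic.irreducible_of_natDegree_eq_four {R : Type*} [CommRing R] [NoZeroDivisors R]
    {p : R[X]} (hm : p.Monic) (hd : p.natDegree = 4) (hroot : ∀ a, ¬ p.IsRoot a)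
    (hquad : ∀ b c d e : R, p ≠ (X ^ 2 + C b * X + C c) * (X ^ 2 + C d * X + C e)) :
    Irreducible p := by
  rw [hm.irreducible_iff_natDegree', hd]
  refine ⟨fun h1 => by simp [h1] at hd, fun f g hf hg hfg hdeg => ?_⟩
  have hsum : f.natDegree + g.natDegree = 4 := by rw [← hf.natDegree_mul hg, hfg, hd]
  obtain ⟨hpos, hle⟩ : 0 < g.natDegree ∧ g.natDegree ≤ 2 := by simpa using hdeg
  interval_cases hg_deg : g.natDegree
  · apply hroot (-g.coeff 0)
    rw [← hfg, hg.eq_X_add_C hg_deg]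
    simp
  · apply hquad (f.coeff 1) (f.coeff 0) (g.coeff 1) (g.coeff 0)
    rw [← hf.eq_X_sq_add_C_mul_X_add_C (by omega), ← hg.eq_X_sq_add_C_mul_X_add_C hg_deg, hfg]

end Polynomial

open Polynomial

noncomputable def modelAtThree (R : Type*) [CommRing R] : R[X] :=
  X ^ 4 - 20 * X ^ 2 - 48 * X + 6400

section modelAtThree

variable (R : Type*) [CommRing R]

theorem monic_modelAtThree [Nontrivial R] : (modelAtThree R).Monic := by
  unfold modelAtThree; monicity!

theorem natDegree_modelAtThree [Nontrivial R] : (modelAtThree R).natDegree = 4 := by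
  unfold modelAtThree; compute_degree!

theorem map_modelAtThree {S : Type*} [CommRing S] (f : R →+* S) :
    (modelAtThree R).map f = modelAtThree S := by
  simp [modelAtThree]

end modelAtThree

instance : Fact (Nat.Prime 7) := ⟨by norm_num⟩

theorem irreducible_modelAtThree_zmod_seven : Irreducible (modelAtThree (ZMod 7)) := by
  refine (monic_modelAtThree _).irreducible_of_natDegree_eq_four (natDegree_modelAtThree _) ?_ ?_
  · intro a
    simp only [modelAtThree, IsRoot.def, eval_add, eval_sub, eval_mul, eval_pow, eval_X,
      eval_ofNat]
    revert a
    decide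
  · intro b c d e h
    have hvals : ∀ t : ZMod 7,
        t ^ 4 - 20 * t ^ 2 - 48 * t + 6400 = (t ^ 2 + b * t + c) * (t ^ 2 + d * t + e) :=
      fun t => by simpa [modelAtThree] using congrArg (eval t) h
    clear h
    revert b c d e
    decide

theorem irreducible_modelAtThree_rat : Irreducible (modelAtThree ℚ) := by
  have hℤ : Irreducible (modelAtThree ℤ) :=
    (monic_modelAtThree ℤ).irreducible_of_irreducible_map (Int.castRingHom (ZMod 7)) _
      (by rw [map_modelAtThree]; exact irreducible_modelAtThree_zmod_seven)
  rw [← map_modelAtThree ℤ (algebraMap ℤ ℚ)]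
  exact (monic_modelAtThree ℤ).irreducible_iff_irreducible_map_fraction_map.mp hℤ

open MvPolynomial

/-- The model as a polynomial in `x` over `ℚ[y]`, where `y = X 0`. -/
noncomputable def modelInX : (MvPolynomial (Fin 1) ℚ)[X] :=
  Polynomial.X ^ 4 - Polynomial.C (2 * X 0 ^ 2 + 2) * Polynomial.X ^ 2
    - Polynomial.C (16 * X 0) * Polynomial.X + Polynomial.C (81 * X 0 ^ 4 - 18 * X 0 ^ 2 + 1)

theorem monic_modelInX : modelInX.Monic := by
  unfold modelInX; monicity!

theorem map_eval_three_modelInX :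
    modelInX.map (MvPolynomial.eval fun _ => 3) = modelAtThree ℚ := by
  simp only [modelInX, modelAtThree, Polynomial.map_add, Polynomial.map_sub, Polynomial.map_mul,
    Polynomial.map_pow, Polynomial.map_C, Polynomial.map_X, map_add, map_sub, map_mul, map_pow,
    map_ofNat, map_one, MvPolynomial.eval_X]
  norm_num

theorem finSuccEquiv_model :
    finSuccEquiv ℚ 1 ((X 0)^4 - 2*(X 0)^2*(X 1)^2 + 81*(X 1)^4 - 2*(X 0)^2
      - 16*(X 0)*(X 1) - 18*(X 1)^2 + 1 : MvPolynomial (Fin 2) ℚ) = modelInX := by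
  simp only [modelInX, map_add, map_sub, map_mul, map_pow, map_ofNat, map_one,
    finSuccEquiv_X_zero, show (1 : Fin 2) = Fin.succ 0 from rfl, finSuccEquiv_X_succ]
  ring

theorem X045_model_irreducible :
    Irreducible ((X 0)^4 - 2*(X 0)^2*(X 1)^2 + 81*(X 1)^4 - 2*(X 0)^2
      - 16*(X 0)*(X 1) - 18*(X 1)^2 + 1 : MvPolynomial (Fin 2) ℚ) := by
  rw [← MulEquiv.irreducible_iff (finSuccEquiv ℚ 1), finSuccEquiv_model]
  refine monic_modelInX.irreducible_of_irreducible_map (MvPolynomial.eval fun _ => 3) _ ?_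
  rw [map_eval_three_modelInX]
  exact irreducible_modelAtThree_rat
end

section
/- Over a field of characteristic zero, suppose u and v satisfy v^2 + uv + v = u^3 + u^2 - 10u - 10 and u ≠ -1. Set G = (uv - u^2 - 9u - 8)/(u + 1) and t = G + 125/G (assuming G ≠ 0). Then t(u+1)G = (u+1)G^2 + 125(u+1), i.e., the algebraic identity (uv - u^2 - 9u - 8)^2 - t(u+1)(uv - u^2 - 9u - 8) + 125(u+1)^2 = 0 holds, where t = (189 + 205u + 7u^2 + u^3 + u^4 - 16uv - 3u^2 v)/(uv - u^2 - 9u - 8). -/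
theorem X015_sq_sub_numerator_mul_add_eq_zero {R : Type*} [CommRing R] {u v : R}
    (hcurve : v^2 + u*v + v = u^3 + u^2 - 10*u - 10) :
    (u*v - u^2 - 9*u - 8)^2 - (189 + 205*u + 7*u^2 + u^3 + u^4 - 16*u*v - 3*u^2*v) * (u + 1)
      + 125*(u + 1)^2 = 0 := by
  linear_combination u^2 * hcurve

theorem t_formula_on_X015_general (K : Type*) [Field K] (u v t : K)
    (hcurve : v^2 + u*v + v = u^3 + u^2 - 10*u - 10)
    (hG : u*v - u^2 - 9*u - 8 ≠ 0)
    (ht : t = (189 + 205*u + 7*u^2 + u^3 + u^4 - 16*u*v - 3*u^2*v)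
        / (u*v - u^2 - 9*u - 8)) :
    (u*v - u^2 - 9*u - 8)^2 - t*(u + 1)*(u*v - u^2 - 9*u - 8) + 125*(u + 1)^2 = 0 := by
  have htG : t * (u*v - u^2 - 9*u - 8) = 189 + 205*u + 7*u^2 + u^3 + u^4 - 16*u*v - 3*u^2*v := by
    rw [ht, div_mul_cancel₀ _ hG]
  linear_combination X015_sq_sub_numerator_mul_add_eq_zero hcurve - (u + 1) * htG

theorem t_formula_on_X015 (K : Type*) [Field K] [CharZero K] (u v t : K)
    (hcurve : v^2 + u*v + v = u^3 + u^2 - 10*u - 10)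
    (hu : u ≠ -1)
    (hG : u*v - u^2 - 9*u - 8 ≠ 0)
    (ht : t = (189 + 205*u + 7*u^2 + u^3 + u^4 - 16*u*v - 3*u^2*v)
        / (u*v - u^2 - 9*u - 8)) :
    (u*v - u^2 - 9*u - 8)^2 - t*(u + 1)*(u*v - u^2 - 9*u - 8) + 125*(u + 1)^2 = 0 :=
  t_formula_on_X015_general K u v t hcurve hG ht
end
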